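/- The sequence Δ_{1,2}, Δ_{2,3}, ..., Δ_{n-1,n} of consecutive 2×2 minors of the generic 2×n matrix is a regular sequence in k[x_1,...,x_n, y_1,...,y_n]. -/

import Mathlib

open MvPolynomial

noncomputable def xv (k : Type*) [Field k] (n : ℕ) (i : Fin n) :
    MvPolynomial (Fin n ⊕ Fin n) k := X (Sum.inl i)

noncomputable def yv (k : Type*) [Field k] (n : ℕ) (i : Fin n) :
    MvPolynomial (Fin n ⊕ Fin n) k := X (Sum.inr i)

/-- The 2×2 minor `Δ_{a,b} = x_a y_b - x_b y_a` of the generic `2 × n` matrix. -/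
noncomputable def Δ (k : Type*) [Field k] (n : ℕ) (a b : Fin n) :
    MvPolynomial (Fin n ⊕ Fin n) k := xv k n a * yv k n b - xv k n b * yv k n a

/-- The list `Δ_{1,2}, Δ_{2,3}, …, Δ_{n-1,n}` of consecutive minors
(in 0-based indexing, `Δ_{t,t+1}` for `t = 0, …, n-2`). -/
noncomputable def consList (k : Type*) [Field k] (n : ℕ) :
    List (MvPolynomial (Fin n ⊕ Fin n) k) :=
  List.ofFn fun t : Fin (n - 1) =>
    Δ k n ⟨t.1, by have := t.isLt; omega⟩ ⟨t.1 + 1, by have := t.isLt; omega⟩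

/-! Write `I_m` for the ideal of the first `m` consecutive minors (0-based, `Δ_{t,t+1}` for
`t < m`) and `φ_v` for the substitution `X_v ↦ 0`. If `φ_v` maps an ideal `I` into itself and
`X_v` is regular modulo `I`, then every `p` with `φ_v p` regular modulo `I` is regular modulo
`I` (split `f = φ_v f + X_v g` and descend on the degree in `X_v`), and `X_v` stays regular
modulo `I + (p)`. Induction on `m` then shows that every variable of column `≥ m` is regular
modulo `I_m`: the substitutions `x_{m+1} ↦ 0` and `y_{m+1} ↦ 0` turn `Δ_{m,m+1}` into the
products `x_m y_{m+1}` and `-x_{m+1} y_m` of such variables, while substituting a variable of a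
later column fixes both `Δ_{m,m+1}` and the generators of `I_m`. -/

namespace MvPolynomial

variable {σ R : Type*} [CommRing R] [DecidableEq σ]

noncomputable def killX (v : σ) : MvPolynomial σ R →ₐ[R] MvPolynomial σ R :=
  aeval (Function.update X v 0)

variable (v : σ)

@[simp] lemma killX_X (i : σ) : killX v (X i : MvPolynomial σ R) = if i = v then 0 else X i := by
  simp [killX, Function.update_apply]

lemma X_dvd_sub_killX (f : MvPolynomial σ R) : X v ∣ f - killX v f := by
  rw [← Ideal.mem_span_singleton, ← Ideal.Quotient.eq]
  have : (Ideal.Quotient.mkₐ R (Ideal.span {X v})).comp (killX v) = Ideal.Quotient.mkₐ R _ := by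
    refine algHom_ext fun i => ?_
    by_cases h : i = v
    · subst h
      simp
    · simp [h]
  exact (congrArg (fun φ => φ f) this).symm

lemma degreeOf_killX (f : MvPolynomial σ R) : degreeOf v (killX v f) = 0 := by
  induction f using MvPolynomial.induction_on with
  | C a => simp
  | add p q hp hq =>
    rw [map_add]
    exact Nat.le_zero.mp ((degreeOf_add_le _ _ _).trans (by rw [hp, hq, max_self]))
  | mul_X p i hp =>
    by_cases h : i = v
    · simp [h]
    · rw [map_mul, killX_X, if_neg h, degreeOf_mul_X_of_ne _ (Ne.symm h), hp]

variable {v} {I : Ideal (MvPolynomial σ R)}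

lemma degreeOf_lt_of_X_mul_eq_sub_killX {f g : MvPolynomial σ R} (hg : g ≠ 0)
    (h : f - killX v f = X v * g) : degreeOf v g < degreeOf v f := by
  have hle : degreeOf v (f - killX v f) ≤ degreeOf v f := by
    simpa [degreeOf_killX] using degreeOf_sub_le v f (killX v f)
  rw [h, mul_comm, (degreeOf_mul_X_eq_degreeOf_add_one_iff v g).mpr hg] at hle
  omega

lemma isSMulRegular_quotient_of_killX (hI : I ≤ I.comap (killX v))
    (hX : IsSMulRegular (MvPolynomial σ R ⧸ I) (X v : MvPolynomial σ R)) {p : MvPolynomial σ R}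
    (hp : IsSMulRegular (MvPolynomial σ R ⧸ I) (killX v p)) :
    IsSMulRegular (MvPolynomial σ R ⧸ I) p := by
  rw [isSMulRegular_quotient_iff_mem_of_smul_mem] at hX hp ⊢
  simp only [smul_eq_mul] at hX hp ⊢
  intro f
  induction hd : degreeOf v f using Nat.strong_induction_on generalizing f with
  | _ d ih =>
  intro hf
  have hf₀ : killX v f ∈ I := hp _ (by simpa using hI hf)
  obtain ⟨g, hg⟩ := X_dvd_sub_killX v f
  have hf_eq : f = killX v f + X v * g := by rw [← hg]; ring
  rcases eq_or_ne g 0 with rfl | hg₀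
  · rw [mul_zero, sub_eq_zero] at hg
    rwa [hg]
  have hpg : p * g ∈ I := hX _ <| by
    have : X v * (p * g) = p * f - p * killX v f := by linear_combination (-p) * hg
    rw [this]
    exact I.sub_mem hf (I.mul_mem_left _ hf₀)
  rw [hf_eq]
  exact I.add_mem hf₀ (I.mul_mem_left _
    (ih _ (hd ▸ degreeOf_lt_of_X_mul_eq_sub_killX hg₀ hg) g rfl hpg))

lemma isSMulRegular_X_quotient_sup_span_of_killX (hI : I ≤ I.comap (killX v))
    (hX : IsSMulRegular (MvPolynomial σ R ⧸ I) (X v : MvPolynomial σ R)) {p : MvPolynomial σ R}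
    (hp : IsSMulRegular (MvPolynomial σ R ⧸ I) (killX v p)) :
    IsSMulRegular (MvPolynomial σ R ⧸ (I ⊔ Ideal.span {p})) (X v : MvPolynomial σ R) := by
  rw [isSMulRegular_quotient_iff_mem_of_smul_mem] at hX hp ⊢
  simp only [smul_eq_mul] at hX hp ⊢
  intro f hf
  obtain ⟨h, hh, q, hq, hhq⟩ := Submodule.mem_sup.mp hf
  obtain ⟨g, rfl⟩ := Ideal.mem_span_singleton'.mp hq
  have hg₀ : killX v g ∈ I := hp _ <| by
    have : killX v p * killX v g = -killX v h := by
      simpa [eq_neg_iff_add_eq_zero, add_comm, mul_comm] using congrArg (killX v) hhq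
    rw [this]
    exact I.neg_mem (hI hh)
  obtain ⟨g', hg'⟩ := X_dvd_sub_killX v g
  have hf' : f - g' * p ∈ I := hX _ <| by
    have : X v * (f - g' * p) = h + killX v g * p := by
      linear_combination hhq.symm + p * hg'
    rw [this]
    exact I.add_mem hh (I.mul_mem_right _ hg₀)
  have : f = (f - g' * p) + g' * p := by ring
  rw [this]
  exact Submodule.add_mem_sup hf' (Ideal.mul_mem_left _ _ (Ideal.mem_span_singleton_self p))

end MvPolynomial

open MvPolynomial

section

variable {k : Type*} [Field k] {n : ℕ}

noncomputable def consIdeal (k : Type*) [Field k] (n m : ℕ) :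
    Ideal (MvPolynomial (Fin n ⊕ Fin n) k) :=
  Ideal.ofList ((consList k n).take m)

def column : Fin n ⊕ Fin n → ℕ := Sum.elim Fin.val Fin.val

@[simp] lemma length_consList : (consList k n).length = n - 1 := by simp [consList]

lemma getElem_consList {t : ℕ} (ht : t < (consList k n).length) :
    (consList k n)[t] = Δ k n ⟨t, by rw [length_consList] at ht; omega⟩
      ⟨t + 1, by rw [length_consList] at ht; omega⟩ := by
  simp [consList]

lemma consIdeal_succ {m : ℕ} (hm : m + 1 < n) :
    consIdeal k n (m + 1) =
      consIdeal k n m ⊔ Ideal.span {Δ k n ⟨m, by omega⟩ ⟨m + 1, hm⟩} := by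
  rw [consIdeal, consIdeal, List.take_add_one, Ideal.ofList_append,
    List.getElem?_eq_getElem (by simp; omega), Option.toList_some, Ideal.ofList_singleton,
    getElem_consList]

lemma killX_Δ {a b : Fin n} {v : Fin n ⊕ Fin n} (ha : a < column v) (hb : b < column v) :
    killX v (Δ k n a b) = Δ k n a b := by
  rcases v with v | v <;> simp [column] at ha hb <;>
    simp [Δ, xv, yv, Fin.ne_of_lt ha, Fin.ne_of_lt hb]

lemma killX_inl_Δ_succ {m : ℕ} (hm : m + 1 < n) :
    killX (Sum.inl ⟨m + 1, hm⟩) (Δ k n ⟨m, by omega⟩ ⟨m + 1, hm⟩) =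
      X (Sum.inl ⟨m, by omega⟩) * X (Sum.inr ⟨m + 1, hm⟩) := by
  simp [Δ, xv, yv]

lemma killX_inr_Δ_succ {m : ℕ} (hm : m + 1 < n) :
    killX (Sum.inr ⟨m + 1, hm⟩) (Δ k n ⟨m, by omega⟩ ⟨m + 1, hm⟩) =
      -(X (Sum.inl ⟨m + 1, hm⟩) * X (Sum.inr ⟨m, by omega⟩)) := by
  simp [Δ, xv, yv]

lemma consIdeal_le_comap_killX {m : ℕ} {v : Fin n ⊕ Fin n} (hv : m < column v) :
    consIdeal k n m ≤ (consIdeal k n m).comap (killX v) := by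
  rw [consIdeal, Ideal.ofList, Ideal.span_le]
  intro g hg
  obtain ⟨t, ht, rfl⟩ := List.mem_iff_getElem.mp hg
  simp only [List.getElem_take, getElem_consList]
  simp only [List.length_take, length_consList] at ht
  rw [SetLike.mem_coe, Ideal.mem_comap, killX_Δ (by simp; omega) (by simp; omega)]
  exact Ideal.subset_span
    (List.mem_iff_getElem.mpr ⟨t, by simp; omega, by simp [getElem_consList]⟩)

lemma isSMulRegular_Δ_quotient_consIdeal {m : ℕ} (hm : m + 1 < n)
    (hX : ∀ v, m ≤ column v →
      IsSMulRegular (MvPolynomial (Fin n ⊕ Fin n) k ⧸ consIdeal k n m)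
        (X v : MvPolynomial (Fin n ⊕ Fin n) k)) :
    IsSMulRegular (MvPolynomial (Fin n ⊕ Fin n) k ⧸ consIdeal k n m)
      (Δ k n ⟨m, by omega⟩ ⟨m + 1, hm⟩) := by
  refine isSMulRegular_quotient_of_killX (v := Sum.inl ⟨m + 1, hm⟩)
    (consIdeal_le_comap_killX (by simp [column])) (hX _ (by simp [column])) ?_
  rw [killX_inl_Δ_succ]
  exact (hX _ (by simp [column])).mul (hX _ (by simp [column]))

lemma isSMulRegular_X_quotient_consIdeal {m : ℕ} (hm : m < n) {v : Fin n ⊕ Fin n}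
    (hv : m ≤ column v) :
    IsSMulRegular (MvPolynomial (Fin n ⊕ Fin n) k ⧸ consIdeal k n m)
      (X v : MvPolynomial (Fin n ⊕ Fin n) k) := by
  induction m generalizing v with
  | zero =>
    rw [isSMulRegular_quotient_iff_mem_of_smul_mem]
    simp [consIdeal, X_ne_zero]
  | succ m ih =>
    have hX : ∀ w, m ≤ column w → IsSMulRegular _ (X w : MvPolynomial (Fin n ⊕ Fin n) k) :=
      fun w hw => ih (by omega) hw
    rw [consIdeal_succ hm]
    refine isSMulRegular_X_quotient_sup_span_of_killX
      (consIdeal_le_comap_killX (by omega)) (hX v (by omega)) ?_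
    rcases Nat.lt_or_eq_of_le hv with hlt | heq
    · rw [killX_Δ (by simp; omega) (by simp; omega)]
      exact isSMulRegular_Δ_quotient_consIdeal hm hX
    · rcases v with v | v <;>
        obtain rfl : v = ⟨m + 1, hm⟩ := Fin.ext (by simpa [column] using heq.symm)
      · rw [killX_inl_Δ_succ]
        exact (hX _ (by simp [column])).mul (hX _ (by simp [column]))
      · rw [killX_inr_Δ_succ, ← neg_one_mul]
        exact (isUnit_one.neg.isSMulRegular _).mul
          ((hX _ (by simp [column])).mul (hX _ (by simp [column])))

lemma ofList_consList_ne_top : Ideal.ofList (consList k n) ≠ ⊤ := by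
  refine ne_top_of_le_ne_top (RingHom.ker_ne_top (constantCoeff (R := k))) ?_
  rw [Ideal.ofList, Ideal.span_le]
  intro g hg
  obtain ⟨t, ht, rfl⟩ := List.mem_iff_getElem.mp hg
  simp [getElem_consList, Δ, xv, yv]

end

theorem stmt3_general (k : Type*) [Field k] (n : ℕ) :
    RingTheory.Sequence.IsRegular (MvPolynomial (Fin n ⊕ Fin n) k) (consList k n) := by
  refine ⟨⟨fun m hm => ?_⟩, ?_⟩ <;> rw [Ideal.smul_eq_mul, Ideal.mul_top]
  · simp only [length_consList] at hm
    rw [getElem_consList]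
    exact isSMulRegular_Δ_quotient_consIdeal (by omega)
      fun v hv => isSMulRegular_X_quotient_consIdeal (by omega) hv
  · exact ofList_consList_ne_top.symm

theorem stmt3 (k : Type*) [Field k] (n : ℕ) (hn : 2 ≤ n) :
    RingTheory.Sequence.IsRegular (MvPolynomial (Fin n ⊕ Fin n) k) (consList k n) :=
  stmt3_general k n
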